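/- Let X be a compact metric space, f : X → X continuous, and f̄ the induced map on the hyperspace K(X). Then f is (topologically) mixing if and only if f̄ is mixing. -/
import Mathlib

open TopologicalSpace

/-- The induced map on the hyperspace of nonempty compact subsets. -/
def barMap {X : Type*} [TopologicalSpace X] (f : X → X) (hf : Continuous f) :
    NonemptyCompacts X → NonemptyCompacts X :=
  fun A => ⟨⟨f '' A, A.isCompact.image hf⟩, A.nonempty.image f⟩

/-- Topological transitivity. -/
def IsTransitive {X : Type*} [TopologicalSpace X] (f : X → X) : Prop :=
  ∀ U V : Set X, IsOpen U → IsOpen V → U.Nonempty → V.Nonempty →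
    ∃ n : ℕ, (f^[n] '' U ∩ V).Nonempty

/-- Topological mixing. -/
def IsMixing {X : Type*} [TopologicalSpace X] (f : X → X) : Prop :=
  ∀ U V : Set X, IsOpen U → IsOpen V → U.Nonempty → V.Nonempty →
    ∃ N : ℕ, ∀ n ≥ N, (f^[n] '' U ∩ V).Nonempty

/-- Weak mixing: `f × f` is transitive. -/
def IsWeaklyMixing {X : Type*} [TopologicalSpace X] (f : X → X) : Prop :=
  IsTransitive (fun p : X × X => (f p.1, f p.2))

/-- The set of periodic points. -/
def Periodics {X : Type*} (f : X → X) : Set X := {x | ∃ n ≥ 1, f^[n] x = x}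

open Metric Set Filter

lemma barMap_iterate_coe {X : Type*} [TopologicalSpace X] (f : X → X) (hf : Continuous f)
    (n : ℕ) (A : NonemptyCompacts X) :
    (((barMap f hf)^[n] A : NonemptyCompacts X) : Set X) = f^[n] '' (A : Set X) := by
  induction n with
  | zero => simp
  | succ n ih =>
      rw [Function.iterate_succ_apply']
      have h1 : (((barMap f hf) ((barMap f hf)^[n] A)) : Set X)
          = f '' (((barMap f hf)^[n] A : NonemptyCompacts X) : Set X) := rfl
      rw [h1, ih, Function.iterate_succ', Set.image_comp]

/--  is mixing iff the induced hyperspace map is mixing. -/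
theorem mixing_iff_hyper_mixing
    {X : Type*} [MetricSpace X] [CompactSpace X]
    (f : X → X) (hf : Continuous f) :
    IsMixing f ↔ IsMixing (barMap f hf) := by
  constructor
  · intro hmix 𝒰 𝒱 h𝒰 h𝒱 ⟨A, hA⟩ ⟨B, hB⟩
    obtain ⟨ε₁, hε₁, hball₁⟩ := Metric.isOpen_iff.1 h𝒰 A hA
    obtain ⟨ε₂, hε₂, hball₂⟩ := Metric.isOpen_iff.1 h𝒱 B hB
    set δ : ℝ := min ε₁ ε₂ / 3 with hδdef
    have hδ : 0 < δ := by positivity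
    obtain ⟨s, hsA, hsfin, hscov⟩ := A.isCompact.finite_cover_balls hδ
    obtain ⟨t, htB, htfin, htcov⟩ := B.isCompact.finite_cover_balls hδ
    have hsne : s.Nonempty := by
      obtain ⟨a, ha⟩ := A.nonempty
      obtain ⟨_, ⟨a', rfl⟩, h⟩ := hscov ha
      simp only [Set.mem_iUnion] at h
      exact ⟨a', h.1⟩
    have htne : t.Nonempty := by
      obtain ⟨b, hb⟩ := B.nonempty
      obtain ⟨_, ⟨b', rfl⟩, h⟩ := htcov hb
      simp only [Set.mem_iUnion] at h
      exact ⟨b', h.1⟩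
    -- eventually, for all pairs there's a point
    have key : ∀ᶠ n in atTop, ∀ p ∈ s ×ˢ t,
        ∃ x ∈ ball p.1 δ, f^[n] x ∈ ball p.2 δ := by
      rw [(hsfin.prod htfin).eventually_all]
      rintro ⟨a, b⟩ ⟨ha, hb⟩
      obtain ⟨N, hN⟩ := hmix (ball a δ) (ball b δ) isOpen_ball isOpen_ball
        ⟨a, mem_ball_self hδ⟩ ⟨b, mem_ball_self hδ⟩
      refine eventually_atTop.2 ⟨N, fun n hn => ?_⟩
      obtain ⟨y, ⟨x, hx, rfl⟩, hy⟩ := hN n hn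
      exact ⟨x, hx, hy⟩
    obtain ⟨N, hN⟩ := eventually_atTop.1 key
    refine ⟨N, fun n hn => ?_⟩
    have hNn := hN n hn
    obtain ⟨a₀, ha₀⟩ := hsne
    have hx0 : X := a₀
    have htotal : ∀ p : X × X, ∃ y,
        p ∈ s ×ˢ t → y ∈ ball p.1 δ ∧ f^[n] y ∈ ball p.2 δ := by
      intro p
      by_cases hp : p ∈ s ×ˢ t
      · obtain ⟨y, hy1, hy2⟩ := hNn p hp
        exact ⟨y, fun _ => ⟨hy1, hy2⟩⟩
      · exact ⟨a₀, fun h => absurd h hp⟩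
    choose g hg using htotal
    set C : Set X := g '' (s ×ˢ t) with hCdef
    have hCfin : C.Finite := (hsfin.prod htfin).image g
    have hCne : C.Nonempty := by
      obtain ⟨b₀, hb₀⟩ := htne
      exact ⟨g (a₀, b₀), ⟨(a₀, b₀), ⟨ha₀, hb₀⟩, rfl⟩⟩
    set Cc : NonemptyCompacts X := ⟨⟨C, hCfin.isCompact⟩, hCne⟩ with hCc
    have hedist1 : hausdorffDist C (A : Set X) ≤ 2 * δ := by
      apply hausdorffDist_le_of_mem_dist (by positivity)
      · rintro x ⟨⟨a, b⟩, hp, rfl⟩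
        refine ⟨a, hsA hp.1, ?_⟩
        have := (hg _ hp).1
        rw [mem_ball] at this
        linarith [this]
      · intro z hz
        obtain ⟨_, ⟨a, rfl⟩, h⟩ := hscov hz
        simp only [Set.mem_iUnion] at h
        obtain ⟨ha, hza⟩ := h
        obtain ⟨b₀, hb₀⟩ := htne
        refine ⟨g (a, b₀), ⟨(a, b₀), ⟨ha, hb₀⟩, rfl⟩, ?_⟩
        have h1 := (hg (a, b₀) ⟨ha, hb₀⟩).1
        rw [mem_ball] at h1 hza
        calc dist z (g (a, b₀)) ≤ dist z a + dist a (g (a, b₀)) := dist_triangle _ _ _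
          _ ≤ δ + δ := by rw [dist_comm a]; linarith
          _ = 2 * δ := by ring
    have hedist2 : hausdorffDist (f^[n] '' C) (B : Set X) ≤ 2 * δ := by
      apply hausdorffDist_le_of_mem_dist (by positivity)
      · rintro y ⟨x, ⟨⟨a, b⟩, hp, rfl⟩, rfl⟩
        refine ⟨b, htB hp.2, ?_⟩
        have := (hg _ hp).2
        rw [mem_ball] at this
        linarith [this]
      · intro z hz
        obtain ⟨_, ⟨b, rfl⟩, h⟩ := htcov hz
        simp only [Set.mem_iUnion] at h
        obtain ⟨hb, hzb⟩ := h
        refine ⟨f^[n] (g (a₀, b)), ⟨g (a₀, b), ⟨(a₀, b), ⟨ha₀, hb⟩, rfl⟩, rfl⟩, ?_⟩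
        have h1 := (hg (a₀, b) ⟨ha₀, hb⟩).2
        rw [mem_ball] at h1 hzb
        calc dist z (f^[n] (g (a₀, b))) ≤ dist z b + dist b (f^[n] (g (a₀, b))) :=
            dist_triangle _ _ _
          _ ≤ δ + δ := by rw [dist_comm b]; linarith
          _ = 2 * δ := by ring
    have hC𝒰 : Cc ∈ 𝒰 := by
      apply hball₁
      rw [mem_ball, NonemptyCompacts.dist_eq]
      have h3 : 2 * δ < ε₁ := by
        have : δ ≤ ε₁ / 3 := by
          rw [hδdef]
          have := min_le_left ε₁ ε₂
          linarith
        linarith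
      calc hausdorffDist (Cc : Set X) (A : Set X) ≤ 2 * δ := hedist1
        _ < ε₁ := h3
    have hC𝒱 : (barMap f hf)^[n] Cc ∈ 𝒱 := by
      apply hball₂
      rw [mem_ball, NonemptyCompacts.dist_eq, barMap_iterate_coe]
      have h3 : 2 * δ < ε₂ := by
        have : δ ≤ ε₂ / 3 := by
          rw [hδdef]
          have := min_le_right ε₁ ε₂
          linarith
        linarith
      calc hausdorffDist (f^[n] '' (Cc : Set X)) (B : Set X) ≤ 2 * δ := hedist2
        _ < ε₂ := h3
    exact ⟨(barMap f hf)^[n] Cc, ⟨Cc, hC𝒰, rfl⟩, hC𝒱⟩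
  · intro hmix U V hU hV ⟨u, hu⟩ ⟨v, hv⟩
    obtain ⟨ε₁, hε₁, hball₁⟩ := Metric.isOpen_iff.1 hU u hu
    obtain ⟨ε₂, hε₂, hball₂⟩ := Metric.isOpen_iff.1 hV v hv
    set su : NonemptyCompacts X := ⟨⟨{u}, isCompact_singleton⟩, Set.singleton_nonempty u⟩
    set sv : NonemptyCompacts X := ⟨⟨{v}, isCompact_singleton⟩, Set.singleton_nonempty v⟩
    obtain ⟨N, hN⟩ := hmix (ball su ε₁) (ball sv ε₂) isOpen_ball isOpen_ball
      ⟨su, mem_ball_self hε₁⟩ ⟨sv, mem_ball_self hε₂⟩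
    refine ⟨N, fun n hn => ?_⟩
    obtain ⟨W, ⟨C, hC, rfl⟩, hW⟩ := hN n hn
    have hCU : (C : Set X) ⊆ U := by
      intro x hx
      apply hball₁
      rw [mem_ball]
      have hne : EMetric.hausdorffEdist (C : Set X) ({u} : Set X) ≠ ⊤ :=
        hausdorffEdist_ne_top_of_nonempty_of_bounded C.nonempty
          (Set.singleton_nonempty u) C.isCompact.isBounded Bornology.isBounded_singleton
      have h1 := infDist_le_hausdorffDist_of_mem hx hne
      rw [infDist_singleton] at h1
      rw [mem_ball, NonemptyCompacts.dist_eq] at hC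
      exact lt_of_le_of_lt h1 hC
    have hCV : f^[n] '' (C : Set X) ⊆ V := by
      intro y hy
      apply hball₂
      rw [mem_ball]
      have hcoe : (((barMap f hf)^[n] C : NonemptyCompacts X) : Set X)
          = f^[n] '' (C : Set X) := barMap_iterate_coe f hf n C
      have hne : EMetric.hausdorffEdist (f^[n] '' (C : Set X)) ({v} : Set X) ≠ ⊤ :=
        hausdorffEdist_ne_top_of_nonempty_of_bounded (C.nonempty.image _)
          (Set.singleton_nonempty v)
          (C.isCompact.image (hf.iterate n)).isBounded Bornology.isBounded_singleton
      have h1 := infDist_le_hausdorffDist_of_mem hy hne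
      rw [infDist_singleton] at h1
      rw [mem_ball, NonemptyCompacts.dist_eq, hcoe] at hW
      exact lt_of_le_of_lt h1 hW
    obtain ⟨c, hc⟩ := C.nonempty
    exact ⟨f^[n] c, ⟨c, hCU hc, rfl⟩, hCV ⟨c, hc, rfl⟩⟩
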